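/- arXiv:1309.1576 — 5 statements merged into one kernel-verified Lean document; each statement's English description precedes it below -/
import Mathlib

section
/- Let x, y, z, w be points in Euclidean space ℝ^d such that the closed line segments [x,y] and [z,w] intersect, and suppose ‖x - y‖ ≤ r and ‖z - w‖ ≤ r for some r > 0. Then if none of the four distances ‖x - z‖, ‖y - z‖, ‖x - w‖, ‖y - w‖ is strictly less than r, we have y = z and x = w. -/
open Set

lemma midpoint_of_mem_segment {E : Type*} [NormedAddCommGroup E] [NormedSpace ℝ E]
    {x y p : E} (h : p ∈ segment ℝ x y) (hd : dist x p = dist x y / 2) :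
    p = midpoint ℝ x y := by
  obtain ⟨a, b, ha, hb, hab, hp⟩ := h
  have hx : x - p = b • (x - y) := by
    rw [← hp]
    have : a = 1 - b := by linarith
    rw [this]
    module
  have hdist : dist x p = b * dist x y := by
    rw [dist_eq_norm, hx, norm_smul, Real.norm_eq_abs, abs_of_nonneg hb, dist_eq_norm]
  rcases eq_or_ne x y with hxy | hxy
  · subst hxy
    have : p = x := by rw [← hp, ← add_smul, hab, one_smul]
    simp [this]
  · have hne : dist x y ≠ 0 := dist_ne_zero.mpr hxy
    have hb2 : b = 1 / 2 := by
      have := hd.symm.trans hdist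
      field_simp at this ⊢
      have h0 : 0 < dist x y := lt_of_le_of_ne dist_nonneg (Ne.symm hne)
      nlinarith
    have ha2 : a = 1 / 2 := by linarith
    rw [← hp, ha2, hb2, midpoint_eq_smul_add, invOf_eq_inv]
    module

theorem stmt0 {d : ℕ} (x y z w : EuclideanSpace ℝ (Fin d)) (r : ℝ) (hr : 0 < r)
    (hxy : ‖x - y‖ ≤ r) (hzw : ‖z - w‖ ≤ r)
    (hmeet : (segment ℝ x y ∩ segment ℝ z w).Nonempty) :
    ‖x - z‖ < r ∨ ‖y - z‖ < r ∨ ‖x - w‖ < r ∨ ‖y - w‖ < r ∨ (y = z ∧ x = w) := by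
  by_contra h
  push_neg at h
  obtain ⟨h1, h2, h3, h4, -⟩ := h
  obtain ⟨p, hp1, hp2⟩ := hmeet
  rw [← dist_eq_norm] at h1 h2 h3 h4 hxy hzw
  have e1 : dist x p + dist p y = dist x y := dist_add_dist_of_mem_segment hp1
  have e2 : dist z p + dist p w = dist z w := dist_add_dist_of_mem_segment hp2
  have t1 : dist x z ≤ dist x p + dist p z := dist_triangle x p z
  have t2 : dist y z ≤ dist y p + dist p z := dist_triangle y p z
  have t3 : dist x w ≤ dist x p + dist p w := dist_triangle x p w
  have t4 : dist y w ≤ dist y p + dist p w := dist_triangle y p w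
  have s1 : dist y p = dist p y := dist_comm y p
  have s2 : dist p z = dist z p := dist_comm p z
  -- derive all half-distances
  have ha : dist x p = r / 2 := by linarith
  have hb : dist p y = r / 2 := by linarith
  have hc : dist p z = r / 2 := by linarith
  have hxyr : dist x y = r := by linarith
  have hxzr : dist x z = r := by linarith
  have heq : dist x p + dist p z = dist x z := by linarith
  have hw : Wbtw ℝ x p z := dist_add_dist_eq_iff.mp heq
  have hpseg : p ∈ segment ℝ x z := (mem_segment_iff_wbtw).mpr hw
  have m1 : p = midpoint ℝ x y := midpoint_of_mem_segment hp1 (by rw [ha, hxyr])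
  have m2 : p = midpoint ℝ x z := midpoint_of_mem_segment hpseg (by rw [ha, hxzr])
  have hyz : y = z := by
    have := m1.symm.trans m2
    have h2p : (2 : ℝ) • p - x = y := by rw [m1, midpoint_eq_smul_add, invOf_eq_inv]; module
    have h2p' : (2 : ℝ) • p - x = z := by rw [m2, midpoint_eq_smul_add, invOf_eq_inv]; module
    rw [← h2p, ← h2p']
  have : dist y z = 0 := by rw [hyz, dist_self]
  linarith
end

section
/- Let x, y, z, w ∈ ℝ^d with x ≠ w or y ≠ z. If the segments [x,y] and [z,w] have a common point, ‖x - y‖ ≤ r, and ‖z - w‖ ≤ r, then at least one of ‖x - z‖, ‖y - z‖, ‖x - w‖, ‖y - w‖ is strictly less than r. -/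
open Set

theorem stmt1 {d : ℕ} (x y z w : EuclideanSpace ℝ (Fin d)) (r : ℝ) (hr : 0 < r)
    (hne : x ≠ w ∨ y ≠ z)
    (hxy : ‖x - y‖ ≤ r) (hzw : ‖z - w‖ ≤ r)
    (hmeet : (segment ℝ x y ∩ segment ℝ z w).Nonempty) :
    ‖x - z‖ < r ∨ ‖y - z‖ < r ∨ ‖x - w‖ < r ∨ ‖y - w‖ < r := by
  by_contra h
  push_neg at h
  obtain ⟨hxz, hyz, hxw, hyw⟩ := h
  obtain ⟨p, hpxy, hpzw⟩ := hmeet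
  rw [← dist_eq_norm] at hxy hzw hxz hyz hxw hyw
  have hA : dist x p + dist p y = dist x y := dist_add_dist_of_mem_segment hpxy
  have hC : dist z p + dist p w = dist z w := dist_add_dist_of_mem_segment hpzw
  have hzp : dist z p = dist p z := dist_comm z p
  have t1 : dist x z ≤ dist x p + dist p z := dist_triangle x p z
  have t2 : dist y z ≤ dist p y + dist p z := by
    calc dist y z ≤ dist y p + dist p z := dist_triangle y p z
    _ = dist p y + dist p z := by rw [dist_comm y p]
  have t3 : dist x w ≤ dist x p + dist p w := dist_triangle x p w
  have t4 : dist y w ≤ dist p y + dist p w := by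
    calc dist y w ≤ dist y p + dist p w := dist_triangle y p w
    _ = dist p y + dist p w := by rw [dist_comm y p]
  -- equality forcing
  have ha : dist x p = r / 2 := by linarith
  have hb : dist p y = r / 2 := by linarith
  have hc : dist p z = r / 2 := by linarith
  have hdxz : dist x z = r := by linarith
  have hdyz : dist y z = r := by linarith
  have hwxz : Wbtw ℝ x p z := dist_add_dist_eq_iff.1 (by linarith)
  have hwyz : Wbtw ℝ y p z := by
    refine dist_add_dist_eq_iff.1 ?_
    rw [dist_comm y p]; linarith
  -- p is the midpoint of [x,z] and of [y,z], hence x = y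
  have key : ∀ u : EuclideanSpace ℝ (Fin d), p ∈ segment ℝ u z → dist u p = r / 2 →
      dist u z = r → p = (2:ℝ)⁻¹ • (u + z) := by
    intro u hmem hup huz
    obtain ⟨a, b, ha0, hb0, hab, hp⟩ := hmem
    have hnorm : dist u p = b * dist u z := by
      rw [dist_eq_norm, dist_eq_norm, ← hp]
      have heq : u - (a • u + b • z) = b • (u - z) := by
        rw [show a = 1 - b by linarith]; module
      rw [heq, norm_smul, Real.norm_eq_abs, abs_of_nonneg hb0]
    have hb' : b = 1 / 2 := by
      rw [huz, hup] at hnorm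
      field_simp at hnorm
      nlinarith
    have ha' : a = 1 / 2 := by linarith
    rw [← hp, ha', hb']
    module
  have hp1 : p = (2:ℝ)⁻¹ • (x + z) := key x (mem_segment_iff_wbtw.2 hwxz) ha hdxz
  have hp2 : p = (2:ℝ)⁻¹ • (y + z) := key y (mem_segment_iff_wbtw.2 hwyz) (by rw [dist_comm]; exact hb) hdyz
  have hxy' : x = y := by
    have h2 := hp1.symm.trans hp2
    have h3 : x + z = y + z := smul_right_injective _ (by norm_num : (2:ℝ)⁻¹ ≠ 0) h2
    exact add_right_cancel h3
  have : dist x y = 0 := by rw [hxy', dist_self]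
  linarith
end

section
/- Let p ∈ ℝ², let q be a point with ‖q - p‖ = R, and let x, y be points with ‖x - p‖ > R and ‖y - p‖ > R. Suppose the segment [x,y] intersects the segment [p,q], and ‖x - y‖ ≤ r for some 0 < r < R. Then ‖x - q‖ < r and ‖y - q‖ < r. -/
open Set

theorem stmt2 (p q x y : EuclideanSpace ℝ (Fin 2)) (r R : ℝ) (hr : 0 < r) (hrR : r < R)
    (hq : ‖q - p‖ = R) (hx : ‖x - p‖ > R) (hy : ‖y - p‖ > R)
    (hmeet : (segment ℝ x y ∩ segment ℝ p q).Nonempty) (hxy : ‖x - y‖ ≤ r) :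
    ‖x - q‖ < r ∧ ‖y - q‖ < r := by
  obtain ⟨z, hzxy, hzpq⟩ := hmeet
  have h1 : dist x z + dist z y = dist x y := dist_add_dist_of_mem_segment hzxy
  have h2 : dist p z + dist z q = dist p q := dist_add_dist_of_mem_segment hzpq
  have hq' : dist p q = R := by rw [dist_comm, dist_eq_norm]; exact hq
  have hx' : dist x p > R := by rw [dist_eq_norm]; exact hx
  have hy' : dist y p > R := by rw [dist_eq_norm]; exact hy
  have hxy' : dist x y ≤ r := by rw [dist_eq_norm]; exact hxy
  have t1 : dist x p ≤ dist x z + dist z p := dist_triangle x z p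
  have t2 : dist y p ≤ dist y z + dist z p := dist_triangle y z p
  have e1 : dist z p = dist p z := dist_comm z p
  have e2 : dist y z = dist z y := dist_comm y z
  have hzq1 : dist z q < dist x z := by linarith
  have hzq2 : dist z q < dist z y := by linarith
  constructor
  · have := dist_triangle x z q
    rw [← dist_eq_norm]
    calc dist x q ≤ dist x z + dist z q := this
      _ < dist x z + dist z y := by linarith
      _ = dist x y := h1
      _ ≤ r := hxy'
  · have := dist_triangle y z q
    rw [← dist_eq_norm]
    calc dist y q ≤ dist y z + dist z q := this
      _ < dist z y + dist x z := by linarith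
      _ = dist x y := by linarith
      _ ≤ r := hxy'
end

section
/- Let γ : [0,1] → ℝ^d be a continuous injective curve, and for δ > 0 define inductively t₀ = 0 and t_{i+1} = sup{ t ∈ [t_i, 1] : ‖γ(t) - γ(t_i)‖ ≤ δ/2 }. Then the sequence (t_i) reaches 1 in finitely many steps; i.e., there exists l ≥ 1 such that t_i = 1 for all i ≥ l. -/
open Set Filter Topology

theorem stmt6 {d : ℕ} (γ : ℝ → EuclideanSpace ℝ (Fin d))
    (hc : ContinuousOn γ (Icc 0 1)) (hi : InjOn γ (Icc 0 1))
    (δ : ℝ) (hδ : 0 < δ) (t : ℕ → ℝ) (h0 : t 0 = 0)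
    (hrec : ∀ i, t (i + 1) = sSup {s | s ∈ Icc (t i) 1 ∧ ‖γ s - γ (t i)‖ ≤ δ / 2}) :
    ∃ l : ℕ, 1 ≤ l ∧ ∀ i ≥ l, t i = 1 := by
  set S : ℕ → Set ℝ := fun i => {s | s ∈ Icc (t i) 1 ∧ ‖γ s - γ (t i)‖ ≤ δ / 2} with hS
  have hδ2 : (0:ℝ) < δ / 2 := by linarith
  have hbdd : ∀ i, BddAbove (S i) := fun i => ⟨1, fun s hs => hs.1.2⟩
  have hmem : ∀ i, t i ∈ Icc (0:ℝ) 1 → t i ∈ S i := fun i hi' =>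
    ⟨⟨le_refl _, hi'.2⟩, by simp [le_of_lt hδ2]⟩
  have hIcc : ∀ i, t i ∈ Icc (0:ℝ) 1 := by
    intro i
    induction i with
    | zero => rw [h0]; exact ⟨le_refl _, zero_le_one⟩
    | succ n ih =>
      rw [hrec n]
      exact ⟨le_trans ih.1 (le_csSup (hbdd n) (hmem n ih)),
        csSup_le ⟨t n, hmem n ih⟩ (fun s hs => hs.1.2)⟩
  have hmono : ∀ i, t i ≤ t (i + 1) := fun i => by
    rw [hrec i]; exact le_csSup (hbdd i) (hmem i (hIcc i))
  -- once at 1, stays at 1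
  have hone : ∀ i, t i = 1 → t (i + 1) = 1 := by
    intro i h1
    rw [hrec i]
    have hSi : S i = {1} := by
      ext s
      simp only [hS, mem_setOf_eq, mem_Icc, h1, mem_singleton_iff]
      constructor
      · rintro ⟨⟨hl, hu⟩, _⟩; linarith
      · rintro rfl; exact ⟨⟨le_refl _, le_refl _⟩, by simp [le_of_lt hδ2]⟩
    rw [show {s | s ∈ Icc (t i) 1 ∧ ‖γ s - γ (t i)‖ ≤ δ / 2} = S i from rfl, hSi, csSup_singleton]
  -- continuity of distance functions
  have hcont : ∀ a, ContinuousOn (fun s => ‖γ s - γ a‖) (Icc (0:ℝ) 1) :=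
    fun a => (hc.sub continuousOn_const).norm
  -- strict increase while < 1
  have hstrict : ∀ i, t i < 1 → t i < t (i + 1) := by
    intro i h1
    have hti := hIcc i
    have hcw : Tendsto (fun s => ‖γ s - γ (t i)‖) (𝓝[Icc (0:ℝ) 1] (t i))
        (𝓝 ‖γ (t i) - γ (t i)‖) := (hcont (t i) (t i) hti).tendsto
    rw [sub_self, norm_zero] at hcw
    have hev : ∀ᶠ s in 𝓝[Icc (0:ℝ) 1] (t i), ‖γ s - γ (t i)‖ < δ / 2 :=
      hcw.eventually_lt_const hδ2
    have hne : (𝓝[Ioc (t i) 1] (t i)).NeBot := by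
      rw [← mem_closure_iff_nhdsWithin_neBot, closure_Ioc (ne_of_lt h1)]
      exact ⟨le_refl _, le_of_lt h1⟩
    have hsub : Ioc (t i) 1 ⊆ Icc (0:ℝ) 1 := fun s hs =>
      ⟨le_trans hti.1 (le_of_lt hs.1), hs.2⟩
    have hev2 : ∀ᶠ s in 𝓝[Ioc (t i) 1] (t i), ‖γ s - γ (t i)‖ < δ / 2 :=
      hev.filter_mono (nhdsWithin_mono _ hsub)
    obtain ⟨s, hs1, hs2⟩ := (hev2.and eventually_mem_nhdsWithin).exists
    calc t i < s := hs2.1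
      _ ≤ t (i + 1) := by
          rw [hrec i]
          exact le_csSup (hbdd i) ⟨⟨le_of_lt hs2.1, hs2.2⟩, le_of_lt hs1⟩
  -- key lower bound
  have hge : ∀ i, t (i + 1) < 1 → δ / 2 ≤ ‖γ (t (i + 1)) - γ (t i)‖ := by
    intro i h1
    have hu := hIcc (i + 1)
    have hsub : Ioc (t (i + 1)) 1 ⊆ Icc (0:ℝ) 1 := fun s hs =>
      ⟨le_trans hu.1 (le_of_lt hs.1), hs.2⟩
    have hne : (𝓝[Ioc (t (i + 1)) 1] (t (i + 1))).NeBot := by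
      rw [← mem_closure_iff_nhdsWithin_neBot, closure_Ioc (ne_of_lt h1)]
      exact ⟨le_refl _, le_of_lt h1⟩
    have hcw : Tendsto (fun s => ‖γ s - γ (t i)‖) (𝓝[Ioc (t (i + 1)) 1] (t (i + 1)))
        (𝓝 ‖γ (t (i + 1)) - γ (t i)‖) :=
      ((hcont (t i) (t (i + 1)) hu).tendsto).mono_left (nhdsWithin_mono _ hsub)
    refine ge_of_tendsto hcw ?_
    filter_upwards [self_mem_nhdsWithin] with s hs
    by_contra hcon
    push_neg at hcon
    have hsS : s ∈ S i := ⟨⟨le_trans (le_trans (hmono i) (le_of_lt hs.1)) (le_refl _), hs.2⟩,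
      le_of_lt hcon⟩
    have : s ≤ t (i + 1) := by rw [hrec i]; exact le_csSup (hbdd i) hsS
    exact absurd hs.1 (not_lt.mpr this)
  -- t reaches 1
  have hexists : ∃ n, t n = 1 := by
    by_contra h
    push_neg at h
    have hlt : ∀ n, t n < 1 := fun n => lt_of_le_of_ne (hIcc n).2 (h n)
    have hM : Monotone t := monotone_nat_of_le_succ hmono
    have hbddr : BddAbove (range t) := ⟨1, by rintro _ ⟨n, rfl⟩; exact (hIcc n).2⟩
    have htend : Tendsto t atTop (𝓝 (⨆ n, t n)) := tendsto_atTop_ciSup hM hbddr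
    set L := ⨆ n, t n with hL
    have hLmem : L ∈ Icc (0:ℝ) 1 :=
      ⟨le_trans (hIcc 0).1 (le_ciSup hbddr 0), ciSup_le fun n => (hIcc n).2⟩
    have htend' : Tendsto t atTop (𝓝[Icc (0:ℝ) 1] L) :=
      tendsto_nhdsWithin_of_tendsto_nhds_of_eventually_within t htend
        (Eventually.of_forall fun n => hIcc n)
    have hγt : Tendsto (fun n => γ (t n)) atTop (𝓝 (γ L)) :=
      ((hc L hLmem).tendsto).comp htend'
    have hγt' : Tendsto (fun n => γ (t (n + 1))) atTop (𝓝 (γ L)) :=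
      hγt.comp (tendsto_add_atTop_nat 1)
    have hdiff : Tendsto (fun n => ‖γ (t (n + 1)) - γ (t n)‖) atTop (𝓝 0) := by
      have h2 := (hγt'.sub hγt).norm
      rw [sub_self, norm_zero] at h2
      exact h2
    obtain ⟨n, hn⟩ := (hdiff.eventually_lt_const hδ2).exists
    exact absurd (hge n (hlt (n + 1))) (not_le.mpr hn)
  obtain ⟨n, hn⟩ := hexists
  have hn1 : 1 ≤ n := by
    rcases Nat.eq_zero_or_pos n with rfl | h
    · rw [h0] at hn; norm_num at hn
    · exact h
  refine ⟨n, hn1, ?_⟩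
  intro i hi'
  induction i, hi' using Nat.le_induction with
  | base => exact hn
  | succ k hk ih => exact hone k ih
end

section
/- Let γ : [0,1] → ℝ² have finite p-variation for some 1 ≤ p < 2. Then the image γ([0,1]) has two-dimensional Lebesgue measure zero. -/
open Set
open scoped ENNReal NNReal

/-- The `p`-th power of the `p`-variation of `γ` over `[0,1]`:
the supremum over all finite partitions `0 ≤ t 0 ≤ t 1 ≤ ⋯ ≤ t n ≤ 1`
of `∑ ‖γ (t (i+1)) - γ (t i)‖ ^ p`. -/
noncomputable def pVariation {E : Type*} [NormedAddCommGroup E] (p : ℝ) (γ : ℝ → E) : ℝ≥0∞ :=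
  ⨆ (n : ℕ) (t : ℕ → ℝ) (_ : Monotone t) (_ : ∀ i, t i ∈ Set.Icc (0:ℝ) 1),
    ∑ i ∈ Finset.range n, (‖γ (t (i + 1)) - γ (t i)‖₊ : ℝ≥0∞) ^ p

/-!
Cut `[0,1]` into pieces `[tᵢ, tᵢ₊₁]` on which `γ` oscillates by at most `ε`, and let `rᵢ ≤ ε` be
the largest distance from `γ tᵢ` on the `i`-th piece, attained at `sᵢ`. The image of that piece
lies in a ball of measure `C rᵢ ^ d ≤ C ε ^ (d - p) rᵢ ^ p`, where `d = dim E > p`. Since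
`t₀ ≤ s₀ ≤ t₁ ≤ s₁ ≤ ⋯` is itself a partition, `∑ rᵢ ^ p` is at most the `p`-variation, so the
image has measure at most `C ε ^ (d - p)` times the `p`-variation, for every `ε > 0`.
-/

open Filter Topology MeasureTheory Module Metric

lemma Icc_subset_biUnion_Icc_succ {α : Type*} [LinearOrder α] (a : ℕ → α) (n : ℕ) :
    Icc (a 0) (a (n + 1)) ⊆ ⋃ i ∈ Finset.range (n + 1), Icc (a i) (a (i + 1)) := by
  induction n with
  | zero => simp
  | succ n ih =>
    intro x hx
    rw [Finset.range_add_one, Finset.set_biUnion_insert]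
    rcases le_or_gt x (a (n + 1)) with h | h
    · exact Or.inr (ih ⟨hx.1, h⟩)
    · exact Or.inl ⟨h.le, hx.2⟩

section Interleave

variable {α : Type*} {t s : ℕ → α}

def interleave (t s : ℕ → α) (j : ℕ) : α := if j % 2 = 0 then t (j / 2) else s (j / 2)

@[simp] lemma interleave_two_mul (i : ℕ) : interleave t s (2 * i) = t i := by
  simp [interleave]

@[simp] lemma interleave_two_mul_add_one (i : ℕ) : interleave t s (2 * i + 1) = s i := by
  simp [interleave, Nat.add_mod, Nat.add_div]

lemma interleave_mem {S : Set α} (ht : ∀ i, t i ∈ S) (hs : ∀ i, s i ∈ S) (j : ℕ) :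
    interleave t s j ∈ S := by
  unfold interleave
  split_ifs
  exacts [ht _, hs _]

lemma monotone_interleave [Preorder α] (hs : ∀ i, s i ∈ Icc (t i) (t (i + 1))) :
    Monotone (interleave t s) := by
  refine monotone_nat_of_le_succ fun j => ?_
  obtain ⟨k, rfl | rfl⟩ := Nat.even_or_odd' j
  · simpa using (hs k).1
  · simpa [show 2 * k + 1 + 1 = 2 * (k + 1) by ring] using (hs k).2

end Interleave

lemma sum_le_pVariation {E : Type*} [NormedAddCommGroup E] (p : ℝ) (γ : ℝ → E) {t s : ℕ → ℝ}
    (ht : ∀ i, t i ∈ Icc (0 : ℝ) 1) (hs : ∀ i, s i ∈ Icc (t i) (t (i + 1))) (n : ℕ) :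
    ∑ i ∈ Finset.range n, (‖γ (s i) - γ (t i)‖₊ : ℝ≥0∞) ^ p ≤ pVariation p γ := by
  set u := interleave t s
  have hu : ∀ j, u j ∈ Icc (0 : ℝ) 1 :=
    interleave_mem ht fun i => Icc_subset_Icc (ht i).1 (ht (i + 1)).2 (hs i)
  calc ∑ i ∈ Finset.range n, (‖γ (s i) - γ (t i)‖₊ : ℝ≥0∞) ^ p
      = ∑ j ∈ (Finset.range n).image (2 * ·), (‖γ (u (j + 1)) - γ (u j)‖₊ : ℝ≥0∞) ^ p := by
        rw [Finset.sum_image fun a _ b _ h => by omega]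
        simp only [u, interleave_two_mul, interleave_two_mul_add_one]
    _ ≤ ∑ j ∈ Finset.range (2 * n), (‖γ (u (j + 1)) - γ (u j)‖₊ : ℝ≥0∞) ^ p :=
        Finset.sum_le_sum_of_subset fun j => by
          simp only [Finset.mem_image, Finset.mem_range]
          omega
    _ ≤ pVariation p γ :=
        le_iSup₂_of_le (2 * n) u (le_iSup₂_of_le (monotone_interleave hs) hu le_rfl)

lemma exists_partition_dist_le {α : Type*} [PseudoMetricSpace α] {γ : ℝ → α}
    (hγ : ContinuousOn γ (Icc 0 1)) {ε : ℝ} (hε : 0 < ε) :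
    ∃ (n : ℕ) (t : ℕ → ℝ), Monotone t ∧ (∀ i, t i ∈ Icc (0 : ℝ) 1) ∧ t 0 = 0 ∧ t (n + 1) = 1 ∧
      ∀ i, ∀ x ∈ Icc (t i) (t (i + 1)), dist (γ x) (γ (t i)) ≤ ε := by
  obtain ⟨δ, hδ, hunif⟩ := Metric.uniformContinuousOn_iff.1
    (isCompact_Icc.uniformContinuousOn_of_continuous hγ) ε hε
  obtain ⟨n, hn⟩ := exists_nat_one_div_lt hδ
  set N : ℝ := n + 1
  have hN : 0 < N := by positivity
  set t : ℕ → ℝ := fun i => min (i / N) 1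
  have ht : ∀ i, t i ∈ Icc (0 : ℝ) 1 := fun i =>
    ⟨le_min (by positivity) zero_le_one, min_le_right _ _⟩
  have hstep : ∀ i, t (i + 1) ≤ t i + 1 / N := fun i => by
    simp only [t, ← min_add_add_right, Nat.cast_succ, add_div]
    exact min_le_min le_rfl (by linarith [one_div_pos.2 hN])
  refine ⟨n, t, fun i j hij => min_le_min (by gcongr) le_rfl, ht, by simp [t], ?_, ?_⟩
  · simp [t, N, div_self hN.ne']
  · intro i x hx
    have hx01 : x ∈ Icc (0 : ℝ) 1 := Icc_subset_Icc (ht i).1 (ht (i + 1)).2 hx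
    refine (hunif x hx01 (t i) (ht i) ?_).le
    rw [Real.dist_eq, abs_of_nonneg (sub_nonneg.2 hx.1)]
    linarith [hx.2, hstep i]

lemma ENNReal.coe_rpow_add_le_rpow_mul_rpow {x : ℝ≥0} {e : ℝ≥0∞} (hx : (x : ℝ≥0∞) ≤ e)
    {a b : ℝ} (ha : 0 ≤ a) (hab : 0 < a + b) : (x : ℝ≥0∞) ^ (a + b) ≤ e ^ a * (x : ℝ≥0∞) ^ b := by
  rcases eq_or_ne x 0 with rfl | hx0
  · simp [ENNReal.zero_rpow_of_pos hab]
  · rw [ENNReal.rpow_add a b (by simpa using hx0) ENNReal.coe_ne_top]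
    gcongr

lemma ENNReal.eq_zero_of_forall_le_ofReal_rpow_mul {a K : ℝ≥0∞} {q : ℝ} (hq : 0 < q)
    (hK : K ≠ ⊤) (h : ∀ ε > 0, a ≤ ENNReal.ofReal ε ^ q * K) : a = 0 := by
  have hlim : Tendsto (fun ε : ℝ => ENNReal.ofReal ε ^ q * K) (𝓝[>] 0) (𝓝 0) := by
    have := ENNReal.Tendsto.mul_const
      (((ENNReal.continuous_rpow_const (y := q)).comp ENNReal.continuous_ofReal).tendsto 0)
      (Or.inr hK)
    simpa [ENNReal.zero_rpow_of_pos hq] using this.mono_left nhdsWithin_le_nhds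
  exact nonpos_iff_eq_zero.1 (ge_of_tendsto hlim (eventually_mem_nhdsWithin.mono h))

section AddHaar

variable {E : Type*} [NormedAddCommGroup E] [NormedSpace ℝ E] [MeasurableSpace E] [BorelSpace E]
  [FiniteDimensional ℝ E] [Nontrivial E] (μ : Measure E) [μ.IsAddHaarMeasure]

lemma addHaar_image_le_of_partition {γ : ℝ → E} (hγ : ContinuousOn γ (Icc 0 1)) {p ε : ℝ}
    (hp : p < finrank ℝ E) {n : ℕ} {t : ℕ → ℝ} (ht : Monotone t)
    (ht01 : ∀ i, t i ∈ Icc (0 : ℝ) 1) (ht0 : t 0 = 0) (htn : t (n + 1) = 1)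
    (hosc : ∀ i, ∀ x ∈ Icc (t i) (t (i + 1)), dist (γ x) (γ (t i)) ≤ ε) :
    μ (γ '' Icc 0 1) ≤ ENNReal.ofReal ε ^ (finrank ℝ E - p) * μ (ball 0 1) * pVariation p γ := by
  have hmax : ∀ i, ∃ s ∈ Icc (t i) (t (i + 1)),
      IsMaxOn (fun x => ‖γ x - γ (t i)‖) (Icc (t i) (t (i + 1))) s := fun i =>
    isCompact_Icc.exists_isMaxOn (nonempty_Icc.2 (ht i.le_succ))
      ((hγ.mono (Icc_subset_Icc (ht01 i).1 (ht01 (i + 1)).2)).sub continuousOn_const).norm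
  choose s hs hsmax using hmax
  set r : ℕ → ℝ := fun i => ‖γ (s i) - γ (t i)‖
  have hcover : γ '' Icc 0 1 ⊆ ⋃ i ∈ Finset.range (n + 1), closedBall (γ (t i)) (r i) := by
    rintro _ ⟨x, hx, rfl⟩
    rw [← ht0, ← htn] at hx
    obtain ⟨i, hi, hxi⟩ := mem_iUnion₂.1 (Icc_subset_biUnion_Icc_succ t n hx)
    exact mem_iUnion₂.2 ⟨i, hi, by simpa [dist_eq_norm] using hsmax i hxi⟩
  have hball : ∀ i, μ (closedBall (γ (t i)) (r i)) ≤
      ENNReal.ofReal ε ^ (finrank ℝ E - p) * μ (ball 0 1) *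
        (‖γ (s i) - γ (t i)‖₊ : ℝ≥0∞) ^ p := by
    intro i
    have hr : (‖γ (s i) - γ (t i)‖₊ : ℝ≥0∞) ≤ ENNReal.ofReal ε := by
      rw [← enorm_eq_nnnorm, ← ofReal_norm]
      exact ENNReal.ofReal_le_ofReal (by simpa [dist_eq_norm] using hosc i (s i) (hs i))
    rw [Measure.addHaar_closedBall μ _ (norm_nonneg _), mul_right_comm]
    gcongr
    calc ENNReal.ofReal (r i ^ finrank ℝ E)
        = (‖γ (s i) - γ (t i)‖₊ : ℝ≥0∞) ^ ((finrank ℝ E - p) + p) := by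
          rw [sub_add_cancel, ENNReal.rpow_natCast, ENNReal.ofReal_pow (norm_nonneg _),
            ofReal_norm, enorm_eq_nnnorm]
      _ ≤ _ := ENNReal.coe_rpow_add_le_rpow_mul_rpow hr (by linarith)
          (by rw [sub_add_cancel]; exact_mod_cast finrank_pos)
  calc μ (γ '' Icc 0 1) ≤ ∑ i ∈ Finset.range (n + 1), μ (closedBall (γ (t i)) (r i)) :=
        (measure_mono hcover).trans (measure_biUnion_finset_le _ _)
    _ ≤ ∑ i ∈ Finset.range (n + 1), ENNReal.ofReal ε ^ (finrank ℝ E - p) * μ (ball 0 1) *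
          (‖γ (s i) - γ (t i)‖₊ : ℝ≥0∞) ^ p := Finset.sum_le_sum fun i _ => hball i
    _ ≤ ENNReal.ofReal ε ^ (finrank ℝ E - p) * μ (ball 0 1) * pVariation p γ := by
        rw [← Finset.mul_sum]
        gcongr
        exact sum_le_pVariation p γ ht01 hs _

theorem addHaar_image_eq_zero_of_pVariation_lt_top {γ : ℝ → E} (hγ : ContinuousOn γ (Icc 0 1))
    {p : ℝ} (hp : p < finrank ℝ E) (hvar : pVariation p γ < ⊤) : μ (γ '' Icc 0 1) = 0 := by
  refine ENNReal.eq_zero_of_forall_le_ofReal_rpow_mul (sub_pos.2 hp)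
    (ENNReal.mul_ne_top (measure_ball_lt_top (μ := μ) (x := 0) (r := 1)).ne hvar.ne)
    fun ε hε => ?_
  obtain ⟨n, t, ht, ht01, ht0, htn, hosc⟩ := exists_partition_dist_le hγ hε
  simpa only [mul_assoc] using addHaar_image_le_of_partition μ hγ hp ht ht01 ht0 htn hosc

end AddHaar

theorem stmt13_general (p : ℝ) (hp2 : p < 2)
    (γ : ℝ → EuclideanSpace ℝ (Fin 2))
    (hc : ContinuousOn γ (Icc 0 1)) (hγ : pVariation p γ < ⊤) :
    MeasureTheory.volume (γ '' Icc 0 1) = 0 :=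
  addHaar_image_eq_zero_of_pVariation_lt_top volume hc (by simpa using hp2) hγ

theorem stmt13 (p : ℝ) (hp : 1 ≤ p) (hp2 : p < 2)
    (γ : ℝ → EuclideanSpace ℝ (Fin 2))
    (hc : ContinuousOn γ (Icc 0 1)) (hγ : pVariation p γ < ⊤) :
    MeasureTheory.volume (γ '' Icc 0 1) = 0 :=
  stmt13_general p hp2 γ hc hγ
end
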